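/- Let P̃_A and P̃_B be g×g complex matrices, H a real g×g matrix, and let A, B, C, D be g×g integer matrices satisfying the symplectic relations. Assume A·Im(P̃_A) + B·Im(P̃_B) = 0, C·Re(P̃_A) + D·Re(P̃_B) = ½·H·(A·Re(P̃_A) + B·Re(P̃_B)), that A·Re(P̃_A) + B·Re(P̃_B) is invertible, and that C·Im(P̃_A) + D·Im(P̃_B) is invertible. Set M̃ = Im(P̃_B)ᵀ·Re(P̃_A) − Im(P̃_A)ᵀ·Re(P̃_B). Then M̃ is invertible and Cᵀ·A = ½·(Aᵀ·H·A − 2·Re(P̃_B)·M̃⁻¹·Im(P̃_B)ᵀ). -/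

import Mathlib

open Matrix

/-- Real matrix obtained from an integer matrix by coercion of the entries. -/
def intToReal {g : ℕ} (A : Matrix (Fin g) (Fin g) ℤ) : Matrix (Fin g) (Fin g) ℝ :=
  A.map (Int.cast : ℤ → ℝ)

/-- Entrywise real part of a complex matrix. -/
def reM {g : ℕ} (P : Matrix (Fin g) (Fin g) ℂ) : Matrix (Fin g) (Fin g) ℝ :=
  P.map Complex.re

/-- Entrywise imaginary part of a complex matrix. -/
def imM {g : ℕ} (P : Matrix (Fin g) (Fin g) ℂ) : Matrix (Fin g) (Fin g) ℝ :=
  P.map Complex.im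

/-!
Write `X = A·Re P̃_A + B·Re P̃_B` and `Y = C·Im P̃_A + D·Im P̃_B`. The block matrix
`[[A,B],[C,D]]` preserves the pairing `((q₁,q₂),(p₁,p₂)) ↦ q₂ᵀp₁ − q₁ᵀp₂`. Since
`A·Im P̃_A + B·Im P̃_B = 0`, this invariance gives `M̃ = YᵀX` (so `M̃` is invertible) and
`Yᵀ·A = Im(P̃_B)ᵀ`, whence `M̃⁻¹·Im(P̃_B)ᵀ = X⁻¹·A`. Invariance against `(q₁,q₂) = (I,0)` gives
`Aᵀ·(C·Re P̃_A + D·Re P̃_B) − Cᵀ·X = Re P̃_B`; substituting `C·Re P̃_A + D·Re P̃_B = ½·H·X` and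
multiplying by `X⁻¹·A` on the right yields the formula for `Cᵀ·A`.
-/

namespace Matrix

variable {R S : Type*} [CommRing R] [CommRing S] {n : Type*} [Fintype n] [DecidableEq n]

/-- The relations saying that the block matrix `!![a, b; c, d]` is symplectic. -/
structure IsSymplecticBlocks (a b c d : Matrix n n R) : Prop where
  transpose_mul_sub_transpose_mul : aᵀ * d - cᵀ * b = 1
  transpose_mul_comm_left : aᵀ * c = cᵀ * a
  transpose_mul_comm_right : dᵀ * b = bᵀ * d

def symplecticPairing {l m : Type*} (q₁ q₂ : Matrix n l R) (p₁ p₂ : Matrix n m R) :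
    Matrix l m R :=
  q₂ᵀ * p₁ - q₁ᵀ * p₂

namespace IsSymplecticBlocks

variable {a b c d : Matrix n n R}

theorem map (h : IsSymplecticBlocks a b c d) (f : R →+* S) :
    IsSymplecticBlocks (a.map f) (b.map f) (c.map f) (d.map f) := by
  obtain ⟨h₁, h₂, h₃⟩ := h
  refine ⟨?_, ?_, ?_⟩
  · simpa [← transpose_map, ← Matrix.map_mul, ← Matrix.map_sub] using congrArg (·.map f) h₁
  · simpa [← transpose_map, ← Matrix.map_mul] using congrArg (·.map f) h₂
  · simpa [← transpose_map, ← Matrix.map_mul] using congrArg (·.map f) h₃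

theorem transpose_mul_sub_transpose_mul' (h : IsSymplecticBlocks a b c d) :
    dᵀ * a - bᵀ * c = 1 := by
  simpa using congrArg transpose h.transpose_mul_sub_transpose_mul

theorem symplecticPairing_invariant (h : IsSymplecticBlocks a b c d) {l m : Type*}
    (q₁ q₂ : Matrix n l R) (p₁ p₂ : Matrix n m R) :
    symplecticPairing (a * q₁ + b * q₂) (c * q₁ + d * q₂) (a * p₁ + b * p₂) (c * p₁ + d * p₂)
      = symplecticPairing q₁ q₂ p₁ p₂ := by
  have hac : cᵀ * a - aᵀ * c = 0 := by rw [h.transpose_mul_comm_left, sub_self]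
  have hbd : dᵀ * b - bᵀ * d = 0 := by rw [h.transpose_mul_comm_right, sub_self]
  have hcb : cᵀ * b - aᵀ * d = -1 := by rw [← h.transpose_mul_sub_transpose_mul, neg_sub]
  calc symplecticPairing (a * q₁ + b * q₂) (c * q₁ + d * q₂) (a * p₁ + b * p₂) (c * p₁ + d * p₂)
      = q₁ᵀ * ((cᵀ * a - aᵀ * c) * p₁ + (cᵀ * b - aᵀ * d) * p₂)
        + q₂ᵀ * ((dᵀ * a - bᵀ * c) * p₁ + (dᵀ * b - bᵀ * d) * p₂) := by
        simp only [symplecticPairing, transpose_add, transpose_mul, Matrix.mul_add,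
          Matrix.add_mul, Matrix.mul_sub, Matrix.sub_mul, Matrix.mul_assoc]
        abel
    _ = symplecticPairing q₁ q₂ p₁ p₂ := by
        rw [hac, hbd, hcb, h.transpose_mul_sub_transpose_mul', symplecticPairing]
        simp only [Matrix.zero_mul, Matrix.one_mul, Matrix.neg_mul, zero_add, add_zero,
          Matrix.mul_neg]
        abel

variable {p₁ p₂ q₁ q₂ : Matrix n n R}

theorem transpose_mul_eq_symplecticPairing (h : IsSymplecticBlocks a b c d)
    (hq : a * q₁ + b * q₂ = 0) :
    (c * q₁ + d * q₂)ᵀ * (a * p₁ + b * p₂) = symplecticPairing q₁ q₂ p₁ p₂ := by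
  simpa [symplecticPairing, hq] using h.symplecticPairing_invariant q₁ q₂ p₁ p₂

theorem transpose_mul_eq_transpose (h : IsSymplecticBlocks a b c d) (hq : a * q₁ + b * q₂ = 0) :
    (c * q₁ + d * q₂)ᵀ * a = q₂ᵀ := by
  simpa [symplecticPairing] using
    h.transpose_mul_eq_symplecticPairing (p₁ := 1) (p₂ := 0) hq

theorem transpose_mul_sub_transpose_mul_eq (h : IsSymplecticBlocks a b c d) :
    aᵀ * (c * p₁ + d * p₂) - cᵀ * (a * p₁ + b * p₂) = p₂ := by
  have := h.symplecticPairing_invariant (1 : Matrix n n R) 0 p₁ p₂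
  simp only [symplecticPairing, Matrix.mul_one, Matrix.mul_zero, add_zero,
    transpose_zero, Matrix.zero_mul, zero_sub, transpose_one, Matrix.one_mul] at this
  rw [← neg_sub, this, neg_neg]

theorem isUnit_symplecticPairing (h : IsSymplecticBlocks a b c d) (hq : a * q₁ + b * q₂ = 0)
    (hY : IsUnit (c * q₁ + d * q₂)) (hX : IsUnit (a * p₁ + b * p₂)) :
    IsUnit (symplecticPairing q₁ q₂ p₁ p₂) := by
  rw [← h.transpose_mul_eq_symplecticPairing hq]
  exact (isUnit_transpose _).mpr hY |>.mul hX

theorem inv_symplecticPairing_mul_transpose (h : IsSymplecticBlocks a b c d)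
    (hq : a * q₁ + b * q₂ = 0) (hY : IsUnit (c * q₁ + d * q₂)) :
    (symplecticPairing q₁ q₂ p₁ p₂)⁻¹ * q₂ᵀ = (a * p₁ + b * p₂)⁻¹ * a := by
  have hYt : IsUnit (c * q₁ + d * q₂)ᵀ.det := by
    rw [det_transpose, ← isUnit_iff_isUnit_det]; exact hY
  rw [← h.transpose_mul_eq_symplecticPairing hq, Matrix.mul_inv_rev,
    ← h.transpose_mul_eq_transpose hq, Matrix.mul_assoc, nonsing_inv_mul_cancel_left _ _ hYt]

theorem transpose_mul_eq_of_eq_mul (h : IsSymplecticBlocks a b c d) {K : Matrix n n R}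
    (hW : c * p₁ + d * p₂ = K * (a * p₁ + b * p₂)) (hX : IsUnit (a * p₁ + b * p₂)) :
    cᵀ * a = aᵀ * K * a - p₂ * (a * p₁ + b * p₂)⁻¹ * a := by
  set X := a * p₁ + b * p₂
  have hXd : IsUnit X.det := (isUnit_iff_isUnit_det X).mp hX
  have key : (aᵀ * K - cᵀ) * X = p₂ := by
    rw [Matrix.sub_mul, Matrix.mul_assoc, ← hW, h.transpose_mul_sub_transpose_mul_eq]
  rw [← key, Matrix.mul_assoc _ X, mul_nonsing_inv _ hXd, Matrix.mul_one, Matrix.sub_mul]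
  abel

end IsSymplecticBlocks

end Matrix

theorem prop_CtA_general
    (g : ℕ)
    (PA PB : Matrix (Fin g) (Fin g) ℂ)
    (H : Matrix (Fin g) (Fin g) ℝ)
    (A B C D : Matrix (Fin g) (Fin g) ℤ)
    (hs1 : Aᵀ * D - Cᵀ * B = 1)
    (hs2 : Aᵀ * C = Cᵀ * A)
    (hs3 : Dᵀ * B = Bᵀ * D)
    (h1 : intToReal A * imM PA + intToReal B * imM PB = 0)
    (h2 : intToReal C * reM PA + intToReal D * reM PB
          = (1 / 2 : ℝ) • (H * (intToReal A * reM PA + intToReal B * reM PB)))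
    (h3 : IsUnit (intToReal A * reM PA + intToReal B * reM PB))
    (h4 : IsUnit (intToReal C * imM PA + intToReal D * imM PB)) :
    IsUnit ((imM PB)ᵀ * reM PA - (imM PA)ᵀ * reM PB)
    ∧ (intToReal C)ᵀ * intToReal A
        = (1 / 2 : ℝ) • ((intToReal A)ᵀ * H * intToReal A
            - (2 : ℝ) • (reM PB * ((imM PB)ᵀ * reM PA - (imM PA)ᵀ * reM PB)⁻¹ * (imM PB)ᵀ)) := by
  have hS : IsSymplecticBlocks (intToReal A) (intToReal B) (intToReal C) (intToReal D) :=
    (IsSymplecticBlocks.mk hs1 hs2 hs3).map (Int.castRingHom ℝ)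
  have hW := h2.trans (smul_mul_assoc (1 / 2 : ℝ) H _).symm
  have hInv := hS.inv_symplecticPairing_mul_transpose (p₁ := reM PA) (p₂ := reM PB) h1 h4
  refine ⟨hS.isUnit_symplecticPairing h1 h4 h3, ?_⟩
  rw [← symplecticPairing, Matrix.mul_assoc (reM PB) _⁻¹, hInv,
    hS.transpose_mul_eq_of_eq_mul hW h3, Matrix.mul_assoc (reM PB)]
  simp only [Matrix.mul_smul, Matrix.smul_mul, smul_sub, smul_smul]
  norm_num

/-- Proposition 4.1 (part for `Cᵀ·A`): with
`M̃ = Im(P̃_B)ᵀ·Re(P̃_A) − Im(P̃_A)ᵀ·Re(P̃_B)`, the matrix `M̃` is invertible and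
`Cᵀ·A = ½·(Aᵀ·H·A − 2·Re(P̃_B)·M̃⁻¹·Im(P̃_B)ᵀ)`. -/
theorem prop_CtA
    (g : ℕ) (hg : 1 ≤ g)
    (PA PB : Matrix (Fin g) (Fin g) ℂ)
    (H : Matrix (Fin g) (Fin g) ℝ)
    (A B C D : Matrix (Fin g) (Fin g) ℤ)
    (hs1 : Aᵀ * D - Cᵀ * B = 1)
    (hs2 : Aᵀ * C = Cᵀ * A)
    (hs3 : Dᵀ * B = Bᵀ * D)
    (h1 : intToReal A * imM PA + intToReal B * imM PB = 0)
    (h2 : intToReal C * reM PA + intToReal D * reM PB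
          = (1 / 2 : ℝ) • (H * (intToReal A * reM PA + intToReal B * reM PB)))
    (h3 : IsUnit (intToReal A * reM PA + intToReal B * reM PB))
    (h4 : IsUnit (intToReal C * imM PA + intToReal D * imM PB)) :
    IsUnit ((imM PB)ᵀ * reM PA - (imM PA)ᵀ * reM PB)
    ∧ (intToReal C)ᵀ * intToReal A
        = (1 / 2 : ℝ) • ((intToReal A)ᵀ * H * intToReal A
            - (2 : ℝ) • (reM PB * ((imM PB)ᵀ * reM PA - (imM PA)ᵀ * reM PB)⁻¹ * (imM PB)ᵀ)) :=
  prop_CtA_general g PA PB H A B C D hs1 hs2 hs3 h1 h2 h3 h4
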